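/- Let D = {x = (x₁,x₂,x₃) ∈ ℝ³ : x₁² − x₂²·(1 − x₃²) + x₃² − 1 > 0}. Then for every point p ∈ ℝ³ \ D there exists an affine line through p whose direction vector v satisfies v₃ = 0 and which is disjoint from D. In particular, D is convex relative to the family of affine lines in ℝ³ parallel to the plane {x : x₃ = 0}. -/

import Mathlib

/-!
Fix a point `p ∉ D` and look only at the horizontal plane `x₃ = p₃ =: a`, where the complement of
`D` is `{x₁² ≤ (1 - a²)(1 + x₂²)}`. A line `x₁ = s x₂ + c` in that plane stays in the complement
as soon as `s² + c² ≤ 1 - a²`, because `(s x₂ + c)² ≤ (s² + c²)(x₂² + 1)` (Cauchy–Schwarz). The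
line through `p` with `(s, c) = p₁ / (1 + p₂²) · (p₂, 1)` has `s² + c² = p₁² / (1 + p₂²) ≤ 1 - a²`.
-/

def Dcyl : Set (EuclideanSpace ℝ (Fin 3)) :=
  {x | x 0 ^ 2 - x 1 ^ 2 * (1 - x 2 ^ 2) + x 2 ^ 2 - 1 > 0}

open AffineSubspace

lemma mem_Dcyl_iff (x : EuclideanSpace ℝ (Fin 3)) :
    x ∈ Dcyl ↔ (1 - x 2 ^ 2) * (1 + x 1 ^ 2) < x 0 ^ 2 := by
  simp only [Dcyl, Set.mem_ofPred_eq]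
  constructor <;> intro h <;> linarith

lemma sq_add_le_mul_sq_add_one (s c y : ℝ) : (s * y + c) ^ 2 ≤ (s ^ 2 + c ^ 2) * (y ^ 2 + 1) := by
  nlinarith [sq_nonneg (s - c * y)]

lemma notMem_Dcyl_of_eq_slope_intercept {x : EuclideanSpace ℝ (Fin 3)} {s c : ℝ}
    (hsc : s ^ 2 + c ^ 2 ≤ 1 - x 2 ^ 2) (hx : x 0 = s * x 1 + c) : x ∉ Dcyl := by
  rw [mem_Dcyl_iff, not_lt, hx]
  calc (s * x 1 + c) ^ 2 ≤ (s ^ 2 + c ^ 2) * (x 1 ^ 2 + 1) := sq_add_le_mul_sq_add_one s c (x 1)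
    _ ≤ (1 - x 2 ^ 2) * (1 + x 1 ^ 2) := by
      rw [add_comm (x 1 ^ 2)]
      exact mul_le_mul_of_nonneg_right hsc (by positivity)

lemma exists_slope_intercept_of_notMem_Dcyl {p : EuclideanSpace ℝ (Fin 3)} (hp : p ∉ Dcyl) :
    ∃ s c : ℝ, s ^ 2 + c ^ 2 ≤ 1 - p 2 ^ 2 ∧ p 0 = s * p 1 + c := by
  rw [mem_Dcyl_iff, not_lt] at hp
  have hpos : (0 : ℝ) < 1 + p 1 ^ 2 := by positivity
  refine ⟨p 0 * p 1 / (1 + p 1 ^ 2), p 0 / (1 + p 1 ^ 2), ?_, by field_simp; ring⟩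
  have hsum : (p 0 * p 1 / (1 + p 1 ^ 2)) ^ 2 + (p 0 / (1 + p 1 ^ 2)) ^ 2
      = p 0 ^ 2 / (1 + p 1 ^ 2) := by
    field_simp; ring
  rwa [hsum, div_le_iff₀ hpos]

noncomputable def horizontalLine (p : EuclideanSpace ℝ (Fin 3)) (s : ℝ) :
    AffineSubspace ℝ (EuclideanSpace ℝ (Fin 3)) :=
  mk' p (ℝ ∙ !₂[s, 1, 0])

lemma finrank_direction_horizontalLine (p : EuclideanSpace ℝ (Fin 3)) (s : ℝ) :
    Module.finrank ℝ (horizontalLine p s).direction = 1 := by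
  rw [horizontalLine, direction_mk']
  refine finrank_span_singleton fun h => ?_
  simpa using congrArg (· 1) h

lemma apply_two_eq_zero_of_mem_direction_horizontalLine {p : EuclideanSpace ℝ (Fin 3)} {s : ℝ}
    {v : EuclideanSpace ℝ (Fin 3)} (hv : v ∈ (horizontalLine p s).direction) : v 2 = 0 := by
  rw [horizontalLine, direction_mk', Submodule.mem_span_singleton] at hv
  obtain ⟨t, rfl⟩ := hv
  simp

lemma eq_of_mem_horizontalLine {p x : EuclideanSpace ℝ (Fin 3)} {s : ℝ}
    (hx : x ∈ horizontalLine p s) : x 2 = p 2 ∧ x 0 - s * x 1 = p 0 - s * p 1 := by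
  rw [horizontalLine, mem_mk', Submodule.mem_span_singleton] at hx
  obtain ⟨t, ht⟩ := hx
  have h0 : t * s = x 0 - p 0 := by simpa using congrArg (· 0) ht
  have h1 : t = x 1 - p 1 := by simpa using congrArg (· 1) ht
  have h2 : 0 = x 2 - p 2 := by simpa using congrArg (· 2) ht
  subst h1
  constructor <;> linarith

/-- Through every point of the complement of `Dcyl` there passes an affine line whose
direction `v` satisfies `v₃ = 0` (i.e., parallel to the plane `{x | x₃ = 0}`) and which
is disjoint from `Dcyl`; thus `Dcyl` is convex relative to the family of affine lines
parallel to `{x | x₃ = 0}`. -/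
theorem cylinder_example_linearly_convex :
    ∀ p ∉ Dcyl, ∃ l : AffineSubspace ℝ (EuclideanSpace ℝ (Fin 3)),
      Module.finrank ℝ l.direction = 1 ∧ (∀ v ∈ l.direction, v 2 = 0) ∧
      p ∈ l ∧ (l : Set (EuclideanSpace ℝ (Fin 3))) ∩ Dcyl = ∅ := by
  intro p hp
  obtain ⟨s, c, hsc, hpc⟩ := exists_slope_intercept_of_notMem_Dcyl hp
  refine ⟨horizontalLine p s, finrank_direction_horizontalLine p s,
    fun v hv => apply_two_eq_zero_of_mem_direction_horizontalLine hv, self_mem_mk' _ _, ?_⟩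
  refine Set.eq_empty_of_forall_notMem fun x ⟨hxl, hxD⟩ => ?_
  obtain ⟨hx2, hx01⟩ := eq_of_mem_horizontalLine hxl
  exact notMem_Dcyl_of_eq_slope_intercept (hx2 ▸ hsc) (by linarith) hxD
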